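/- Let q(x) = ∃y. φ(x,y) be a rooted CQ, K a DL-Lite_core^bag ontology with TBox T, and z ⊆ y. If z is not realisable by T, then [q,z]^{C(K)} = ∅ (the empty bag). -/

import Mathlib

/-!
Common formalization of the bag semantics of DL-Lite ontologies
(Nikolaou et al., "The Bag Semantics of Ontology-Based Data Access").
-/

open scoped Classical

noncomputable section

/-- Individuals (constants). -/
abbrev Ind : Type := ℕ
/-- Variables. -/
abbrev Var : Type := ℕ
/-- Atomic concepts (unary predicates). -/
abbrev AtomicConcept : Type := ℕ
/-- Atomic roles (binary predicates). -/
abbrev AtomicRole : Type := ℕ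

/-- A role is an atomic role or its inverse. -/
inductive Role where
  | atomic : AtomicRole → Role
  | inv : AtomicRole → Role
  deriving DecidableEq

/-- A concept is an atomic concept or `∃R` for a role `R`. -/
inductive DLConcept where
  | atomic : AtomicConcept → DLConcept
  | ex : Role → DLConcept
  deriving DecidableEq

/-- TBox axioms: inclusions and disjointness axioms between concepts or roles. -/
inductive TBoxAxiom where
  | cIncl : DLConcept → DLConcept → TBoxAxiom
  | rIncl : Role → Role → TBoxAxiom
  | cDisj : DLConcept → DLConcept → TBoxAxiom
  | rDisj : Role → Role → TBoxAxiom
  deriving DecidableEq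

/-- A DL-Lite_R TBox: a finite set of TBox axioms. -/
abbrev TBox : Type := Finset TBoxAxiom

/-- A DL-Lite_core TBox: only concept inclusions and concept disjointness axioms. -/
def TBox.IsCore (T : TBox) : Prop :=
  ∀ ax ∈ T, (∃ C D, ax = TBoxAxiom.cIncl C D) ∨ (∃ C D, ax = TBoxAxiom.cDisj C D)

/-- ABox assertions. -/
inductive Assertion where
  | conceptA : AtomicConcept → Ind → Assertion
  | roleA : AtomicRole → Ind → Ind → Assertion
  deriving DecidableEq

/-- A bag ABox: a finite bag of assertions (represented as a multiset). -/
abbrev BagABox : Type := Multiset Assertion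

/-- Multiplicity of an assertion in a bag ABox, as an extended natural. -/
def BagABox.mult (A : BagABox) (s : Assertion) : ℕ∞ := (A.count s : ℕ∞)

/-- Sum of an arbitrary family of extended naturals. -/
def bagSum {α : Type*} (f : α → ℕ∞) : ℕ∞ := ⨆ s : Finset α, ∑ x ∈ s, f x

/-- A bag interpretation. -/
structure BagInterp : Type 1 where
  Δ : Type
  dne : Nonempty Δ
  indMap : Ind → Δ
  indInj : Function.Injective indMap
  cI : AtomicConcept → Δ → ℕ∞
  rI : AtomicRole → Δ → Δ → ℕ∞

/-- Extension of the interpretation function to roles. -/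
def BagInterp.roleMult (I : BagInterp) : Role → I.Δ → I.Δ → ℕ∞
  | Role.atomic P => fun u v => I.rI P u v
  | Role.inv P => fun u v => I.rI P v u

/-- Extension of the interpretation function to concepts. -/
def BagInterp.conceptMult (I : BagInterp) : DLConcept → I.Δ → ℕ∞
  | DLConcept.atomic A => fun u => I.cI A u
  | DLConcept.ex R => fun u => bagSum (fun v => I.roleMult R u v)

/-- Multiplicity of an assertion in a bag interpretation. -/
def BagInterp.assertMult (I : BagInterp) : Assertion → ℕ∞
  | Assertion.conceptA A a => I.cI A (I.indMap a)
  | Assertion.roleA P a b => I.rI P (I.indMap a) (I.indMap b)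

/-- Satisfaction of a TBox axiom by a bag interpretation. -/
def BagInterp.SatisfiesAx (I : BagInterp) : TBoxAxiom → Prop
  | TBoxAxiom.cIncl C D => ∀ u, I.conceptMult C u ≤ I.conceptMult D u
  | TBoxAxiom.rIncl R S => ∀ u v, I.roleMult R u v ≤ I.roleMult S u v
  | TBoxAxiom.cDisj C D => ∀ u, min (I.conceptMult C u) (I.conceptMult D u) = 0
  | TBoxAxiom.rDisj R S => ∀ u v, min (I.roleMult R u v) (I.roleMult S u v) = 0

/-- A DL-Lite^bag ontology. -/
structure Ontology : Type where
  tbox : TBox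
  abox : BagABox

/-- `I` is a bag model of the ontology `K`. -/
def BagInterp.IsModel (I : BagInterp) (K : Ontology) : Prop :=
  (∀ ax ∈ K.tbox, I.SatisfiesAx ax) ∧
  ∀ s : Assertion, BagABox.mult K.abox s ≤ I.assertMult s

/-- Satisfiability of an ontology under bag semantics. -/
def Ontology.Satisfiable (K : Ontology) : Prop := ∃ I : BagInterp, I.IsModel K

/- ## Conjunctive queries -/

/-- Terms: variables or individuals. -/
inductive Term where
  | var : Var → Term
  | ind : Ind → Term
  deriving DecidableEq

def Term.varsOf : Term → List Var
  | Term.var v => [v]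
  | Term.ind _ => []

def Term.indsOf : Term → List Ind
  | Term.var _ => []
  | Term.ind a => [a]

/-- Query atoms: concept atoms, role atoms, and equalities. -/
inductive QAtom where
  | conceptAt : AtomicConcept → Term → QAtom
  | roleAt : AtomicRole → Term → Term → QAtom
  | eqAt : Var → Term → QAtom
  deriving DecidableEq

def QAtom.terms : QAtom → List Term
  | QAtom.conceptAt _ t => [t]
  | QAtom.roleAt _ t₁ t₂ => [t₁, t₂]
  | QAtom.eqAt z t => [Term.var z, t]

def QAtom.vars : QAtom → List Var
  | QAtom.conceptAt _ t => t.varsOf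
  | QAtom.roleAt _ t₁ t₂ => t₁.varsOf ++ t₂.varsOf
  | QAtom.eqAt z t => z :: t.varsOf

/-- A conjunctive query `q(x) = ∃y. φ(x,y)`: a tuple of answer variables,
a tuple of existential variables, and a conjunction (list, i.e. allowing
repetitions) of atoms. -/
structure CQ : Type where
  answerVars : List Var
  existVars : List Var
  atoms : List QAtom

def CQ.vars (q : CQ) : List Var := q.answerVars ++ q.existVars

/-- Value of a term under a valuation of the variables. -/
def termVal (I : BagInterp) (f : Var → I.Δ) : Term → I.Δ
  | Term.var v => f v
  | Term.ind a => I.indMap a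

/-- Multiplicity contributed by an atom under a valuation: for predicate atoms the
multiplicity of the image tuple, for equalities the indicator of satisfaction. -/
def QAtom.mult (I : BagInterp) (f : Var → I.Δ) : QAtom → ℕ∞
  | QAtom.conceptAt A t => I.cI A (termVal I f t)
  | QAtom.roleAt P t₁ t₂ => I.rI P (termVal I f t₁) (termVal I f t₂)
  | QAtom.eqAt z t => if f z = termVal I f t then 1 else 0

/-- The bag answers `q^I(ā)`: the sum, over all valuations of the variables of `q`
mapping the answer variables to `ā` (valuations are normalized to a fixed junk
value outside the variables of `q`), of the product of the multiplicities of the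
atom occurrences of `q`. -/
def CQ.bagAnswer (q : CQ) (I : BagInterp) (a : List Ind) : ℕ∞ :=
  bagSum (fun f : {f : Var → I.Δ //
      (∀ v, v ∉ q.vars → f v = I.indMap 0) ∧
      q.answerVars.map f = a.map I.indMap} =>
    (q.atoms.map (QAtom.mult I f.1)).prod)

/-- Bag certain answers: pointwise minimum over all bag models. -/
def bagCertain (K : Ontology) (q : CQ) (a : List Ind) : ℕ∞ :=
  ⨅ (I : BagInterp) (_ : I.IsModel K), q.bagAnswer I a

/-- Base relation of the equivalence relation generated by the equality atoms. -/
def CQ.eqBase (q : CQ) : Term → Term → Prop := fun t₁ t₂ =>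
  ∃ z t, QAtom.eqAt z t ∈ q.atoms ∧ t₁ = Term.var z ∧ t₂ = t

/-- Equivalence of terms generated by the equality atoms of `q`. -/
def CQ.eqRel (q : CQ) : Term → Term → Prop := Relation.EqvGen q.eqBase

/-- Safety: the class of every variable contains a term occurring in a
non-equality atom. -/
def CQ.Safe (q : CQ) : Prop :=
  ∀ v ∈ q.vars, ∃ t : Term, ∃ atm ∈ q.atoms,
    (∀ z s, atm ≠ QAtom.eqAt z s) ∧ t ∈ QAtom.terms atm ∧ q.eqRel (Term.var v) t

/-- Well-formedness of CQs: repetition-free disjoint tuples of variables, all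
variables of the atoms among the declared variables, and safety. -/
def CQ.WellFormed (q : CQ) : Prop :=
  q.answerVars.Nodup ∧ q.existVars.Nodup ∧
  (∀ v ∈ q.answerVars, v ∉ q.existVars) ∧
  (∀ atm ∈ q.atoms, ∀ v ∈ QAtom.vars atm, v ∈ q.vars) ∧
  q.Safe

def CQ.mentionsTerm (q : CQ) (t : Term) : Prop := ∃ atm ∈ q.atoms, t ∈ QAtom.terms atm

/-- Adjacency in the Gaifman graph of `q` (on terms; equality atoms merge the
classes of their two terms, which for connectivity purposes is the same as
making them adjacent). -/
def CQ.gaifmanAdj (q : CQ) : Term → Term → Prop := fun t₁ t₂ =>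
  ∃ atm ∈ q.atoms, t₁ ∈ QAtom.terms atm ∧ t₂ ∈ QAtom.terms atm

/-- A CQ is rooted if every connected component of its Gaifman graph contains
an answer variable or an individual. -/
def CQ.Rooted (q : CQ) : Prop :=
  ∀ t : Term, q.mentionsTerm t →
    ∃ t' : Term, Relation.ReflTransGen q.gaifmanAdj t t' ∧
      ((∃ v ∈ q.answerVars, t' = Term.var v) ∨ ∃ a : Ind, t' = Term.ind a)

/- ## Set semantics -/

/-- A classical (set) interpretation. -/
structure SetInterp : Type 1 where
  Δ : Type
  dne : Nonempty Δ
  indMap : Ind → Δ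
  indInj : Function.Injective indMap
  cI : AtomicConcept → Set Δ
  rI : AtomicRole → Set (Δ × Δ)

def SetInterp.roleSet (I : SetInterp) : Role → Set (I.Δ × I.Δ)
  | Role.atomic P => I.rI P
  | Role.inv P => {p | (p.2, p.1) ∈ I.rI P}

def SetInterp.conceptSet (I : SetInterp) : DLConcept → Set I.Δ
  | DLConcept.atomic A => I.cI A
  | DLConcept.ex R => {u | ∃ v, (u, v) ∈ I.roleSet R}

def SetInterp.SatisfiesAx (I : SetInterp) : TBoxAxiom → Prop
  | TBoxAxiom.cIncl C D => I.conceptSet C ⊆ I.conceptSet D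
  | TBoxAxiom.rIncl R S => I.roleSet R ⊆ I.roleSet S
  | TBoxAxiom.cDisj C D => I.conceptSet C ∩ I.conceptSet D = ∅
  | TBoxAxiom.rDisj R S => I.roleSet R ∩ I.roleSet S = ∅

def SetInterp.SatisfiesAssertion (I : SetInterp) : Assertion → Prop
  | Assertion.conceptA A a => I.indMap a ∈ I.cI A
  | Assertion.roleA P a b => (I.indMap a, I.indMap b) ∈ I.rI P

/-- `I` is a (set) model of the TBox `T` and the set ABox `A`. -/
def SetInterp.IsModelOf (I : SetInterp) (T : TBox) (A : Finset Assertion) : Prop :=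
  (∀ ax ∈ T, I.SatisfiesAx ax) ∧ ∀ s ∈ A, I.SatisfiesAssertion s

def setTermVal (I : SetInterp) (f : Var → I.Δ) : Term → I.Δ
  | Term.var v => f v
  | Term.ind a => I.indMap a

def SetInterp.SatAtom (I : SetInterp) (f : Var → I.Δ) : QAtom → Prop
  | QAtom.conceptAt A t => setTermVal I f t ∈ I.cI A
  | QAtom.roleAt P t₁ t₂ => (setTermVal I f t₁, setTermVal I f t₂) ∈ I.rI P
  | QAtom.eqAt z t => f z = setTermVal I f t

/-- `q(ā)` holds in the set interpretation `I`. -/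
def SetInterp.SatCQ (I : SetInterp) (q : CQ) (a : List Ind) : Prop :=
  ∃ f : Var → I.Δ, q.answerVars.map f = a.map I.indMap ∧ ∀ atm ∈ q.atoms, I.SatAtom f atm

/-- Entailment of a concept inclusion from a TBox (standard set semantics). -/
def TBox.EntailsCI (T : TBox) (C D : DLConcept) : Prop :=
  ∀ I : SetInterp, (∀ ax ∈ T, I.SatisfiesAx ax) → I.conceptSet C ⊆ I.conceptSet D

/- ## The canonical bag model -/

/-- Domain elements of the canonical model: individuals and anonymous elements
`w^j_{u,R}`. -/
inductive CanElem where
  | ind : Ind → CanElem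
  | anon : CanElem → Role → ℕ → CanElem
  deriving DecidableEq

def CanElem.isAnon : CanElem → Prop
  | CanElem.ind _ => False
  | CanElem.anon _ _ _ => True

/-- A stage of the canonical-model construction: a set of active elements and
bag interpretations of the predicates. -/
structure PreInterp : Type where
  active : Set CanElem
  c : AtomicConcept → CanElem → ℕ∞
  r : AtomicRole → CanElem → CanElem → ℕ∞

def PreInterp.toInterp (P : PreInterp) : BagInterp where
  Δ := CanElem
  dne := ⟨CanElem.ind 0⟩
  indMap := CanElem.ind
  indInj := fun a b h => by cases h; rfl
  cI := P.c
  rI := P.r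

/-- Concept closure: `ccl(u,I,T)(C)` is the supremum of `C₀^I(u)` over all
concepts `C₀` with `T ⊨ C₀ ⊑ C`. -/
def cclI (T : TBox) (I : BagInterp) (C : DLConcept) (u : I.Δ) : ℕ∞ :=
  ⨆ C₀ : {C₀ : DLConcept // TBox.EntailsCI T C₀ C}, I.conceptMult C₀.1 u

def PreInterp.ccl (P : PreInterp) (T : TBox) (u : CanElem) (C : DLConcept) : ℕ∞ :=
  cclI T P.toInterp C u

/-- `δ = ccl(u,C_{i-1},T)(∃R) − (∃R)^{C_{i-1}}(u)` (truncated subtraction). -/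
def PreInterp.delta (P : PreInterp) (T : TBox) (u : CanElem) (R : Role) : ℕ∞ :=
  P.ccl T u (DLConcept.ex R) - P.toInterp.conceptMult (DLConcept.ex R) u

/-- The anonymous elements freshly added when stepping from `P`. -/
def PreInterp.NewAnon (P : PreInterp) (T : TBox) (w : CanElem) : Prop :=
  ∃ u R j, w = CanElem.anon u R j ∧ u ∈ P.active ∧ (j : ℕ∞) < P.delta T u R

/-- One step of the canonical-model construction. -/
def PreInterp.step (P : PreInterp) (T : TBox) : PreInterp where
  active := P.active ∪ {w | P.NewAnon T w}
  c := fun A u => if u ∈ P.active then P.ccl T u (DLConcept.atomic A) else 0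
  r := fun P₀ u v =>
    if u ∈ P.active ∧ v ∈ P.active then P.r P₀ u v
    else if ∃ j, v = CanElem.anon u (Role.atomic P₀) j ∧ P.NewAnon T v then 1
    else if ∃ j, u = CanElem.anon v (Role.inv P₀) j ∧ P.NewAnon T u then 1
    else 0

/-- The stages `C_i(K)` of the canonical bag model. -/
def canStage (K : Ontology) : ℕ → PreInterp
  | 0 =>
    { active := Set.range CanElem.ind
      c := fun A u =>
        match u with
        | CanElem.ind a => BagABox.mult K.abox (Assertion.conceptA A a)
        | _ => 0
      r := fun P u v =>
        match u, v with
        | CanElem.ind a, CanElem.ind b => BagABox.mult K.abox (Assertion.roleA P a b)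
        | _, _ => 0 }
  | (i + 1) => (canStage K i).step K.tbox

/-- The canonical bag model `C(K) = ⋃_{i ≥ 0} C_i(K)` (pointwise maximum). -/
def canInterp (K : Ontology) : BagInterp where
  Δ := CanElem
  dne := ⟨CanElem.ind 0⟩
  indMap := CanElem.ind
  indInj := fun a b h => by cases h; rfl
  cI := fun A u => ⨆ i, (canStage K i).c A u
  rI := fun P u v => ⨆ i, (canStage K i).r P u v

/-- The canonical bag model `C(⟨∅,A⟩)` of the ontology with empty TBox:
individuals as domain, every predicate interpreted by its ABox bag. -/
def emptyCanInterp (A : BagABox) : BagInterp where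
  Δ := Ind
  dne := ⟨0⟩
  indMap := id
  indInj := fun _ _ h => h
  cI := fun C a => BagABox.mult A (Assertion.conceptA C a)
  rI := fun P a b => BagABox.mult A (Assertion.roleA P a b)

/-- `[q,z]^{C(K)}`: bag answers over the canonical model computed only over
valuations sending the variables of `z` to anonymous elements and the remaining
existential variables to individuals. -/
def CQ.restrictedAnswer (q : CQ) (K : Ontology) (z : Finset Var) (a : List Ind) : ℕ∞ :=
  bagSum (fun f : {f : Var → CanElem //
      (∀ v, v ∉ q.vars → f v = CanElem.ind 0) ∧
      q.answerVars.map f = a.map CanElem.ind ∧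
      ∀ v ∈ q.existVars, (v ∈ z → CanElem.isAnon (f v)) ∧ (v ∉ z → ∃ b : Ind, f v = CanElem.ind b)} =>
    (q.atoms.map (QAtom.mult (canInterp K) f.1)).prod)

/- ## Ma-connected subsets, realisability, and the per-`z` rewritten query -/

/-- `t` is a variable belonging to `z`. -/
def Term.IsZVar (t : Term) (z : Finset Var) : Prop := ∃ v ∈ z, t = Term.var v

/-- Adjacency in the Gaifman graph restricted to nodes that are variables of `z`. -/
def CQ.zAdj (q : CQ) (z : Finset Var) : Term → Term → Prop := fun t₁ t₂ =>
  q.gaifmanAdj t₁ t₂ ∧ t₁.IsZVar z ∧ t₂.IsZVar z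

/-- `z'` is maximally connected in the anonymous part (ma-connected) within `z`. -/
def CQ.MAConnected (q : CQ) (z z' : Finset Var) : Prop :=
  z' ⊆ z ∧
  (∀ v ∈ z', ∀ w ∈ z, Relation.ReflTransGen (q.zAdj z) (Term.var v) (Term.var w) → w ∈ z') ∧
  (∀ v ∈ z', ∀ w ∈ z', Relation.ReflTransGen (q.zAdj z) (Term.var v) (Term.var w))

/-- `φ_{z'}`: the subconjunction of all atoms of `q` mentioning a variable of `z'`. -/
def CQ.subAtoms (q : CQ) (z' : Finset Var) : List QAtom :=
  q.atoms.filter (fun atm => decide (∃ v ∈ z', v ∈ QAtom.vars atm))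

def termsOfList (l : List QAtom) : List Term :=
  l.foldr (fun atm acc => QAtom.terms atm ++ acc) []

/-- `t_{z'}`: all terms occurring in `φ_{z'}` that are not variables of `z`. -/
def CQ.tTerms (q : CQ) (z z' : Finset Var) : List Term :=
  (termsOfList (q.subAtoms z')).filter (fun t => decide (¬ t.IsZVar z))

/-- `atm` is a legitimate choice of `α_{z'}`: an atom of `φ_{z'}` of the form
`P(t,z)` or `P(z,t)` with `z ∈ z'` and the term `t` not a variable of `z`. -/
def IsAlphaFor (q : CQ) (z z' : Finset Var) (atm : QAtom) : Prop :=
  atm ∈ q.subAtoms z' ∧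
  ((∃ P t v, v ∈ z' ∧ ¬ Term.IsZVar t z ∧ atm = QAtom.roleAt P t (Term.var v)) ∨
   (∃ P t v, v ∈ z' ∧ ¬ Term.IsZVar t z ∧ atm = QAtom.roleAt P (Term.var v) t))

def CQ.inds (q : CQ) : List Ind :=
  (termsOfList q.atoms).foldr (fun t acc => t.indsOf ++ acc) []

def CQ.maxInd (q : CQ) : Ind := q.inds.foldr max 0

/-- The individual `a` of `q^a_{z'}`: the individual among `t_{z'}` if one
exists, and a fresh individual otherwise. -/
def freshA (q : CQ) (z z' : Finset Var) : Ind :=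
  if h : ∃ c : Ind, Term.ind c ∈ q.tTerms z z' then h.choose else q.maxInd + 1

/-- A fresh individual `b` (distinct from `freshA`). -/
def freshB (q : CQ) : Ind := q.maxInd + 2

/-- The one-assertion bag ABox `A'` used to test realisability: `{P(a,b)}` if
`α_{z'} = P(t,z)` and `{P(b,a)}` if `α_{z'} = P(z,t)`. -/
def alphaABox (z' : Finset Var) (atm : QAtom) (a b : Ind) : BagABox :=
  match atm with
  | QAtom.roleAt P _ t₂ =>
      if Term.IsZVar t₂ z' then {Assertion.roleA P a b} else {Assertion.roleA P b a}
  | _ => 0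

def subVars (q : CQ) (z' : Finset Var) : List Var :=
  (q.subAtoms z').foldr (fun atm acc => QAtom.vars atm ++ acc) []

/-- The bag answer `(q^a_{z'})^{C(⟨T,A'⟩)}(⟨⟩)` of the Boolean query
`q^a_{z'}() = ∃x'.∃z'. φ_{z'} ∧ ⋀_{t ∈ t_{z'}}(t = a) ∧ ⋀_{z ∈ z'}(z ≠ a)`
over the canonical model of `⟨T,A'⟩`. -/
def realQAnswer (T : TBox) (q : CQ) (z z' : Finset Var) (atm : QAtom) : ℕ∞ :=
  bagSum (fun f : {f : Var → CanElem //
      (∀ v, v ∉ subVars q z' → f v = CanElem.ind 0) ∧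
      (∀ t ∈ q.tTerms z z',
        termVal (canInterp ⟨T, alphaABox z' atm (freshA q z z') (freshB q)⟩) f t
          = CanElem.ind (freshA q z z')) ∧
      ∀ v ∈ z', f v ≠ CanElem.ind (freshA q z z')} =>
    ((q.subAtoms z').map
      (QAtom.mult (canInterp ⟨T, alphaABox z' atm (freshA q z z') (freshB q)⟩) f.1)).prod)

/-- Equality-consistency of `z`: no equality atom `z = t` with `z ∈ z` and `t ∉ z`. -/
def EqConsistent (q : CQ) (z : Finset Var) : Prop :=
  ∀ v t, QAtom.eqAt v t ∈ q.atoms → v ∈ z → Term.IsZVar t z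

/-- The ma-connected subset `z'` is realisable by `T` (w.r.t. the chosen `α_{z'}`). -/
def RealisableMA (T : TBox) (q : CQ) (z z' : Finset Var) (atm : QAtom) : Prop :=
  1 ≤ realQAnswer T q z z' atm

/-- `z` is realisable by `T`: equality-consistent and every nonempty
ma-connected subset of `z` is realisable. -/
def RealisableZ (T : TBox) (q : CQ) (z : Finset Var) (alpha : Finset Var → QAtom) : Prop :=
  EqConsistent q z ∧
  ∀ z' : Finset Var, q.MAConnected z z' → z'.Nonempty → RealisableMA T q z z' (alpha z')

/-- The nonempty ma-connected subsets of `z`. -/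
def maSets (q : CQ) (z : Finset Var) : Finset (Finset Var) :=
  z.powerset.filter (fun z' => q.MAConnected z z' ∧ z'.Nonempty)

def tTermVars (q : CQ) (z z' : Finset Var) : List Var :=
  (q.tTerms z z').foldr (fun t acc => Term.varsOf t ++ acc) []

/-- The equalities identifying all the terms of `t_{z'}`. -/
def eqAtomsFor (q : CQ) (z z' : Finset Var) : List QAtom :=
  (tTermVars q z z').foldr
    (fun v acc => ((q.tTerms z z').map (fun t => QAtom.eqAt v t)) ++ acc) []

/-- Atoms of `q_z`: the atoms of `q` not mentioning a variable of `z`, plus,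
for each nonempty ma-connected `z' ⊆ z`, the atom `α_{z'}` together with the
equalities identifying the terms of `t_{z'}`. -/
def qzAtoms (q : CQ) (z : Finset Var) (alpha : Finset Var → QAtom) : List QAtom :=
  q.atoms.filter (fun atm => decide (¬ ∃ v ∈ z, v ∈ QAtom.vars atm))
    ++ (maSets q z).toList.foldr (fun z' acc => alpha z' :: (eqAtomsFor q z z' ++ acc)) []

/-- The CQ `q_z(x) = ∃y'. φ_z(x,y')`. -/
def qz (q : CQ) (z : Finset Var) (alpha : Finset Var → QAtom) : CQ where
  answerVars := q.answerVars
  existVars := q.existVars.filter (fun v => decide (∃ atm ∈ qzAtoms q z alpha, v ∈ QAtom.vars atm))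
  atoms := qzAtoms q z alpha

/- ## The BALG rewriting `q̄` -/

/-- Value of an atom of `q_z` after the rewriting step 3 (`chasing back'' with
the TBox): concept atoms `A(t)` become `⋁_{T ⊨ C ⊑ A} ζ_C(t)`, role atoms with a
`z`-variable become the corresponding truncated difference, and the remaining
atoms are evaluated as before. -/
def rewAtomVal (T : TBox) (I : BagInterp) (z : Finset Var) (f : Var → I.Δ) : QAtom → ℕ∞
  | QAtom.conceptAt A t => cclI T I (DLConcept.atomic A) (termVal I f t)
  | QAtom.roleAt P t₁ t₂ =>
      if Term.IsZVar t₂ z then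
        cclI T I (DLConcept.ex (Role.atomic P)) (termVal I f t₁)
          - I.conceptMult (DLConcept.ex (Role.atomic P)) (termVal I f t₁)
      else if Term.IsZVar t₁ z then
        cclI T I (DLConcept.ex (Role.inv P)) (termVal I f t₂)
          - I.conceptMult (DLConcept.ex (Role.inv P)) (termVal I f t₂)
      else I.rI P (termVal I f t₁) (termVal I f t₂)
  | QAtom.eqAt v t => if f v = termVal I f t then 1 else 0

/-- Bag answers of the BALG query `q̄_z`, obtained from `q_z` by projecting only
the variables of `y' ∖ z` and replacing atoms as in `rewAtomVal`. -/
def rewAnswer (T : TBox) (qq : CQ) (z : Finset Var) (I : BagInterp) (a : List Ind) : ℕ∞ :=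
  bagSum (fun f : {f : Var → I.Δ //
      (∀ v, v ∉ qq.answerVars ++ qq.existVars.filter (fun u => decide (u ∉ z)) →
        f v = I.indMap 0) ∧
      qq.answerVars.map f = a.map I.indMap} =>
    (qq.atoms.map (rewAtomVal T I z f.1)).prod)

/- ## BALG¹_ε queries -/

def Term.fvars (t : Term) : Finset Var :=
  match t with
  | Term.var v => {v}
  | Term.ind _ => ∅

/-- Syntax of BALG¹_ε queries. -/
inductive BQuery where
  | atomC : AtomicConcept → Term → BQuery
  | atomR : AtomicRole → Term → Term → BQuery
  | conj : BQuery → BQuery → BQuery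
  | eqSel : BQuery → Var → Term → BQuery
  | proj : List Var → BQuery → BQuery
  | maxU : BQuery → BQuery → BQuery
  | arithU : BQuery → BQuery → BQuery
  | diff : BQuery → BQuery → BQuery

/-- Answer variables of a BALG¹_ε query. -/
def BQuery.fv : BQuery → Finset Var
  | BQuery.atomC _ t => t.fvars
  | BQuery.atomR _ t₁ t₂ => t₁.fvars ∪ t₂.fvars
  | BQuery.conj q₁ q₂ => q₁.fv ∪ q₂.fv
  | BQuery.eqSel q _ t => q.fv ∪ t.fvars
  | BQuery.proj ys q => q.fv \ ys.toFinset
  | BQuery.maxU q₁ _ => q₁.fv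
  | BQuery.arithU q₁ _ => q₁.fv
  | BQuery.diff q₁ _ => q₁.fv

/-- Well-formedness of BALG¹_ε queries. -/
def BQuery.WF : BQuery → Prop
  | BQuery.atomC _ _ => True
  | BQuery.atomR _ _ _ => True
  | BQuery.conj q₁ q₂ => q₁.WF ∧ q₂.WF
  | BQuery.eqSel q x _ => q.WF ∧ x ∈ q.fv
  | BQuery.proj _ q => q.WF
  | BQuery.maxU q₁ q₂ => q₁.WF ∧ q₂.WF ∧ q₁.fv = q₂.fv
  | BQuery.arithU q₁ q₂ => q₁.WF ∧ q₂.WF ∧ q₁.fv = q₂.fv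
  | BQuery.diff q₁ q₂ => q₁.WF ∧ q₂.WF ∧ q₁.fv = q₂.fv

/-- Semantics of BALG¹_ε queries under a valuation of the answer variables. -/
def BQuery.val (I : BagInterp) : BQuery → (Var → I.Δ) → ℕ∞
  | BQuery.atomC A t, f => I.cI A (termVal I f t)
  | BQuery.atomR P t₁ t₂, f => I.rI P (termVal I f t₁) (termVal I f t₂)
  | BQuery.conj q₁ q₂, f => q₁.val I f * q₂.val I f
  | BQuery.eqSel q x t, f => if f x = termVal I f t then q.val I f else 0
  | BQuery.proj ys q, f => bagSum (fun g : {g : Var → I.Δ // ∀ v, v ∉ ys → g v = f v} => q.val I g.1)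
  | BQuery.maxU q₁ q₂, f => max (q₁.val I f) (q₂.val I f)
  | BQuery.arithU q₁ q₂, f => q₁.val I f + q₂.val I f
  | BQuery.diff q₁ q₂, f => q₁.val I f - q₂.val I f

/-- Bag answers of a BALG¹_ε query with answer variables `xs` on a tuple `a`. -/
def BQuery.answer (Q : BQuery) (xs : List Var) (I : BagInterp) (a : List Ind) : ℕ∞ :=
  if a.length = xs.length then Q.val I (fun v => I.indMap (a.getD (xs.idxOf v) 0)) else 0

/- ## Enumerated bags, e-homomorphisms, and e-valuations -/

/-- Enumerated copies of a bag of domain elements (for an atomic concept). -/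
def EBagC (I : BagInterp) (A : AtomicConcept) : Type :=
  {p : I.Δ × ℕ // 1 ≤ p.2 ∧ (p.2 : ℕ∞) ≤ I.cI A p.1}

/-- Enumerated copies of a bag of pairs (for an atomic role). -/
def EBagR (I : BagInterp) (P : AtomicRole) : Type :=
  {p : (I.Δ × I.Δ) × ℕ // 1 ≤ p.2 ∧ (p.2 : ℕ∞) ≤ I.rI P p.1.1 p.1.2}

/-- An e-homomorphism between the enumerated versions of two bag interpretations. -/
structure EHom (I J : BagInterp) where
  h : I.Δ → J.Δ
  hInd : ∀ a : Ind, h (I.indMap a) = J.indMap a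
  hC : ∀ A : AtomicConcept, EBagC I A → EBagC J A
  hC_fst : ∀ (A : AtomicConcept) (x : EBagC I A), (hC A x).1.1 = h x.1.1
  hR : ∀ P : AtomicRole, EBagR I P → EBagR J P
  hR_fst : ∀ (P : AtomicRole) (x : EBagR I P), (hR P x).1.1 = (h x.1.1.1, h x.1.1.2)

/-- Predicate-injectivity on individuals of an e-homomorphism. -/
def EHom.PredInj {I J : BagInterp} (e : EHom I J) : Prop :=
  ∀ u : I.Δ, (∃ a : Ind, e.h u = J.indMap a) →
    (∀ A : AtomicConcept, ∀ x y : EBagC I A,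
      x.1.1 = u → y.1.1 = u → x.1.2 ≠ y.1.2 → e.hC A x ≠ e.hC A y) ∧
    (∀ P : AtomicRole, ∀ x y : EBagR I P, x.1.1.1 = u → y.1.1.1 = u →
      (x.1.1.2, x.1.2) ≠ (y.1.1.2, y.1.2) → e.hR P x ≠ e.hR P y) ∧
    (∀ P : AtomicRole, ∀ x y : EBagR I P, x.1.1.2 = u → y.1.1.2 = u →
      (x.1.1.1, x.1.2) ≠ (y.1.1.1, y.1.2) → e.hR P x ≠ e.hR P y)

/-- Enumerated atoms of a CQ (seen as a bag of atoms). -/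
def EAtom (q : CQ) : Type := {p : QAtom × ℕ // 1 ≤ p.2 ∧ p.2 ≤ q.atoms.count p.1}

/-- An e-valuation of the enumerated query `q^e` over the enumerated
interpretation `I^e`. -/
structure EVal (q : CQ) (I : BagInterp) where
  ν : Var → I.Δ
  hjunk : ∀ v, v ∉ q.vars → ν v = I.indMap 0
  heq : ∀ z t, QAtom.eqAt z t ∈ q.atoms → ν z = termVal I ν t
  ℓ : EAtom q → ℕ
  hone : ∀ e : EAtom q, 1 ≤ ℓ e
  hconcept : ∀ (e : EAtom q) (A : AtomicConcept) (t : Term),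
    e.1.1 = QAtom.conceptAt A t → (ℓ e : ℕ∞) ≤ I.cI A (termVal I ν t)
  hrole : ∀ (e : EAtom q) (P : AtomicRole) (t₁ t₂ : Term),
    e.1.1 = QAtom.roleAt P t₁ t₂ → (ℓ e : ℕ∞) ≤ I.rI P (termVal I ν t₁) (termVal I ν t₂)
  heqm : ∀ (e : EAtom q) (z : Var) (t : Term), e.1.1 = QAtom.eqAt z t → ℓ e = 1

/-- The tuple of domain elements to which an e-atom is sent by an e-valuation. -/
def EVal.imgTerms {q : CQ} {I : BagInterp} (ev : EVal q I) (e : EAtom q) : List I.Δ :=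
  (QAtom.terms e.1.1).map (termVal I ev.ν)

/-- The enumerated image of an e-atom under an e-valuation. -/
def EVal.img {q : CQ} {I : BagInterp} (ev : EVal q I) (e : EAtom q) : List I.Δ × ℕ :=
  (ev.imgTerms e, ev.ℓ e)

/- ## Auxiliary concrete queries -/

/-- The CQ `ζ_C(x)`: `A(x)`, `∃y.P(x,y)` or `∃y.P(y,x)`. -/
def zetaCQ : DLConcept → CQ
  | DLConcept.atomic A => ⟨[0], [], [QAtom.conceptAt A (Term.var 0)]⟩
  | DLConcept.ex (Role.atomic P) => ⟨[0], [1], [QAtom.roleAt P (Term.var 0) (Term.var 1)]⟩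
  | DLConcept.ex (Role.inv P) => ⟨[0], [1], [QAtom.roleAt P (Term.var 1) (Term.var 0)]⟩

/-- The CQ `q(x) = R(x,x)`. -/
def selfCQ (P : AtomicRole) : CQ := ⟨[0], [], [QAtom.roleAt P (Term.var 0) (Term.var 0)]⟩

/-!
Suppose a valuation `f` contributes to `[q,z]^{C(K)}`. All atoms of `q` then hold in `C(K)`, and
a term takes an anonymous value exactly when it is a variable of `z`; so no equality links `z` to
a term outside `z`. In `C(K)` an anonymous element is related only to its parent and its children,
hence the variables of an ma-connected `z'` land in the tree below a single element `w₀`, created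
as an `R₀`-child of an individual `c` where `R₀` is the role of `α_{z'}`, while every other term
of `φ_{z'}` is sent to `c`. Stage by stage, the tree below `w₀` in `C(K)` is built exactly like
the tree below `b` in `C(⟨T, {R₀(a,b)}⟩)`: in both places the only successor outside the tree is
a single `R₀⁻`-neighbour. Relabelling `w₀ ↦ b` and `c ↦ a` turns `f` into a match of `q^a_{z'}`.
-/

section BagSum

variable {α β : Type*}

lemma sum_le_bagSum (f : α → ℕ∞) (s : Finset α) : ∑ x ∈ s, f x ≤ bagSum f :=
  le_iSup (fun s : Finset α => ∑ x ∈ s, f x) s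

lemma le_bagSum (f : α → ℕ∞) (x : α) : f x ≤ bagSum f := by
  simpa using sum_le_bagSum f {x}

lemma bagSum_eq_zero_iff {f : α → ℕ∞} : bagSum f = 0 ↔ ∀ x, f x = 0 := by
  refine ⟨fun h x => le_antisymm (h ▸ le_bagSum f x) bot_le, fun h => ?_⟩
  simp [bagSum, h]

@[simp] lemma bagSum_zero : bagSum (fun _ : α => (0 : ℕ∞)) = 0 :=
  bagSum_eq_zero_iff.mpr fun _ => rfl

lemma bagSum_add (f g : α → ℕ∞) : bagSum (fun x => f x + g x) = bagSum f + bagSum g := by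
  simp only [bagSum, Finset.sum_add_distrib]
  exact (ENat.iSup_add_iSup_of_monotone (fun _ _ => Finset.sum_le_sum_of_subset)
    (fun _ _ => Finset.sum_le_sum_of_subset)).symm

lemma bagSum_ite_eq [DecidableEq α] (p : α) (c : ℕ∞) :
    bagSum (fun x => if x = p then c else 0) = c := by
  refine le_antisymm (iSup_le fun s => ?_) ?_
  · rw [Finset.sum_ite_eq']
    split_ifs <;> simp
  · simpa using le_bagSum (fun x => if x = p then c else 0) p

lemma bagSum_comp_of_injective (e : α → β) (he : Function.Injective e) (f : β → ℕ∞)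
    (h0 : ∀ y ∉ Set.range e, f y = 0) : bagSum f = bagSum (f ∘ e) := by
  refine le_antisymm (iSup_le fun s => ?_) (iSup_le fun t => ?_)
  · calc ∑ y ∈ s, f y = ∑ y ∈ (s.preimage e he.injOn).image e, f y := by
          rw [Finset.image_preimage]
          exact (Finset.sum_filter_of_ne fun y _ hy => by_contra fun hr => hy (h0 y hr)).symm
      _ = ∑ x ∈ s.preimage e he.injOn, f (e x) := Finset.sum_image fun _ _ _ _ h => he h
      _ ≤ bagSum (f ∘ e) := sum_le_bagSum (f ∘ e) _
  · rw [Function.comp_def, ← Finset.sum_image fun _ _ _ _ h => he h]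
    exact sum_le_bagSum f _

end BagSum

namespace CanElem

lemma exists_eq_ind_of_not_isAnon {x : CanElem} (h : ¬ x.isAnon) : ∃ d, x = ind d := by
  cases x with
  | ind d => exact ⟨d, rfl⟩
  | anon => exact absurd trivial h

def depth : CanElem → ℕ
  | ind _ => 0
  | anon u _ _ => u.depth + 1

inductive Below (w₀ : CanElem) : CanElem → Prop
  | refl : Below w₀ w₀
  | child {u : CanElem} (R : Role) (j : ℕ) : Below w₀ u → Below w₀ (anon u R j)

lemma Below.depth_le {w₀ x : CanElem} (h : Below w₀ x) : w₀.depth ≤ x.depth := by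
  induction h with
  | refl => rfl
  | child _ _ _ ih => exact ih.trans (Nat.le_succ _)

lemma Below.isAnon {p x : CanElem} {R : Role} {j : ℕ} (h : Below (anon p R j) x) : x.isAnon := by
  cases h <;> trivial

lemma Below.anon_ne {w₀ u : CanElem} (h : Below w₀ u) (R : Role) (j : ℕ) :
    anon u R j ≠ w₀ := by
  intro he
  have := he ▸ h.depth_le
  simp [depth] at this

lemma Below.eq_of_parent_ind {p : CanElem} {R₀ R : Role} {j₀ j : ℕ} {d : Ind}
    (h : Below (anon p R₀ j₀) (anon (ind d) R j)) : anon (ind d) R j = anon p R₀ j₀ := by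
  cases h with
  | refl => rfl
  | child _ _ hu => exact absurd hu.isAnon id

/-- The map identifying the subtree below `w₀` with the subtree below the individual `b`. -/
def relabel (w₀ : CanElem) (b : Ind) : CanElem → CanElem
  | ind a => if ind a = w₀ then ind b else ind a
  | anon u R j => if anon u R j = w₀ then ind b else anon (relabel w₀ b u) R j

lemma relabel_self (w₀ : CanElem) (b : Ind) : relabel w₀ b w₀ = ind b := by
  cases w₀ <;> simp [relabel]

lemma relabel_anon_of_below {w₀ u : CanElem} (b : Ind) (h : Below w₀ u) (R : Role) (j : ℕ) :
    relabel w₀ b (anon u R j) = anon (relabel w₀ b u) R j := by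
  simp [relabel, h.anon_ne R j]

lemma relabel_ne_ind {w₀ x : CanElem} {a b : Ind} (hx : Below w₀ x) (hab : a ≠ b) :
    relabel w₀ b x ≠ ind a := by
  cases hx with
  | refl => simpa [relabel_self] using hab.symm
  | child R j hu => simp [relabel_anon_of_below b hu]

/-- The ancestor of an anonymous element that is a child of an individual. -/
def branch : CanElem → CanElem
  | ind a => ind a
  | anon (ind c) R j => anon (ind c) R j
  | anon (anon u R' j') _ _ => branch (anon u R' j')

lemma branch_anon {u : CanElem} (hu : u.isAnon) (R : Role) (j : ℕ) :
    branch (anon u R j) = branch u := by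
  cases u with
  | ind => exact absurd hu id
  | anon => rfl

lemma below_branch : ∀ {x : CanElem}, x.isAnon → Below (branch x) x
  | ind _, h => absurd h id
  | anon (ind _) _ _, _ => Below.refl
  | anon (anon u R' j') R j, _ => Below.child R j (below_branch (x := anon u R' j') trivial)

end CanElem

open CanElem

section CanonicalStages

variable {K : Ontology} {i : ℕ} {u : CanElem} {R : Role} {j : ℕ}

lemma canStage_active_mono : Monotone fun i => (canStage K i).active :=
  monotone_nat_of_le_succ fun _ => Set.subset_union_left

lemma ind_mem_canStage_active (a : Ind) : ∀ i, ind a ∈ (canStage K i).active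
  | 0 => ⟨a, rfl⟩
  | i + 1 => canStage_active_mono i.le_succ (ind_mem_canStage_active a i)

lemma anon_not_mem_canStage_zero : anon u R j ∉ (canStage K 0).active := by
  rintro ⟨a, ha⟩
  cases ha

lemma PreInterp.newAnon_anon_iff {P : PreInterp} {T : TBox} :
    P.NewAnon T (anon u R j) ↔ u ∈ P.active ∧ (j : ℕ∞) < P.delta T u R := by
  simp [PreInterp.NewAnon]

lemma parent_mem_canStage_active_of_succ :
    ∀ {i}, anon u R j ∈ (canStage K (i + 1)).active → u ∈ (canStage K i).active
  | 0, h => h.elim (fun h0 => absurd h0 anon_not_mem_canStage_zero)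
      fun hn => (PreInterp.newAnon_anon_iff.mp hn).1
  | i + 1, h => h.elim
      (fun hi => canStage_active_mono i.le_succ (parent_mem_canStage_active_of_succ hi))
      fun hn => (PreInterp.newAnon_anon_iff.mp hn).1

lemma parent_mem_canStage_active (h : anon u R j ∈ (canStage K i).active) :
    u ∈ (canStage K i).active := by
  cases i with
  | zero => exact absurd h anon_not_mem_canStage_zero
  | succ i => exact canStage_active_mono i.le_succ (parent_mem_canStage_active_of_succ h)

lemma CanElem.Below.mem_canStage_active {w₀ : CanElem} (hb : Below w₀ u)
    (hu : u ∈ (canStage K i).active) : w₀ ∈ (canStage K i).active := by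
  induction hb with
  | refl => exact hu
  | child _ _ _ ih => exact ih (parent_mem_canStage_active hu)

lemma canStage_c_mono (A : AtomicConcept) (u : CanElem) :
    Monotone fun i => (canStage K i).c A u := by
  refine monotone_nat_of_le_succ fun i => ?_
  show _ ≤ if u ∈ (canStage K i).active then _ else 0
  split_ifs with hu
  · exact le_iSup (fun C₀ : {C₀ // TBox.EntailsCI K.tbox C₀ (.atomic A)} =>
      (canStage K i).toInterp.conceptMult C₀.1 u) ⟨.atomic A, fun _ _ => subset_rfl⟩
  · cases i with
    | zero =>
      cases u with
      | ind a => exact absurd (ind_mem_canStage_active a 0) hu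
      | anon => exact le_rfl
    | succ i => exact (if_neg fun h => hu (canStage_active_mono i.le_succ h)).le

def canDomain (K : Ontology) : Set CanElem := ⋃ i, (canStage K i).active

lemma exists_born (h : anon u R j ∈ canDomain K) :
    ∃ i, anon u R j ∉ (canStage K i).active ∧ anon u R j ∈ (canStage K (i + 1)).active := by
  obtain ⟨i, hi⟩ := Set.mem_iUnion.mp h
  induction i with
  | zero => exact absurd hi anon_not_mem_canStage_zero
  | succ i ih => exact if h' : _ then ih h' else ⟨i, h', hi⟩

end CanonicalStages

def Role.inverse : Role → Role
  | .atomic P => .inv P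
  | .inv P => .atomic P

lemma BagInterp.roleMult_inverse (I : BagInterp) (R : Role) (x y : I.Δ) :
    I.roleMult R.inverse x y = I.roleMult R y x := by
  cases R <;> rfl

def roleAssertion : Role → Ind → Ind → Assertion
  | .atomic P, a, b => .roleA P a b
  | .inv P, a, b => .roleA P b a

def Ontology.roleCount (K : Ontology) (R : Role) (a b : Ind) : ℕ∞ :=
  K.abox.mult (roleAssertion R a b)

def Ontology.aboxRoleMult (K : Ontology) (R : Role) : CanElem → CanElem → ℕ∞
  | ind a, ind b => K.roleCount R a b
  | _, _ => 0

def childInd (S : Set CanElem) (x : CanElem) (R : Role) (y : CanElem) : ℕ∞ :=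
  if ∃ n, y = anon x R n ∧ y ∈ S then 1 else 0

section CanonicalRoles

variable {K : Ontology} {i : ℕ}

lemma childInd_of_mem {S : Set CanElem} {x y : CanElem} (R : Role) (hy : y ∈ S) :
    childInd S x R y = if ∃ n, y = anon x R n then 1 else 0 := by
  simp [childInd, hy]

lemma childInd_canStage_succ {x y : CanElem} (R : Role)
    (h : ¬ (x ∈ (canStage K i).active ∧ y ∈ (canStage K i).active)) :
    childInd (canStage K (i + 1)).active x R y
      = if ∃ n, y = anon x R n ∧ (canStage K i).NewAnon K.tbox y then 1 else 0 := by
  unfold childInd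
  congr 1
  refine propext (exists_congr fun n => and_congr_right fun hy => ⟨fun hy' => ?_, Or.inr⟩)
  subst hy
  exact hy'.elim (fun hi => absurd ⟨parent_mem_canStage_active hi, hi⟩ h) id

lemma canStage_r_eq (P : AtomicRole) (x y : CanElem) :
    (canStage K i).r P x y = K.aboxRoleMult (.atomic P) x y
      + childInd (canStage K i).active y (.inv P) x
      + childInd (canStage K i).active x (.atomic P) y := by
  induction i with
  | zero =>
    cases x <;> cases y <;>
      simp [canStage, childInd, Ontology.aboxRoleMult, Ontology.roleCount, roleAssertion]
  | succ i ih =>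
    show (if _ ∧ _ then _ else _) = _
    by_cases hxy : x ∈ (canStage K i).active ∧ y ∈ (canStage K i).active
    · rw [if_pos hxy, ih, childInd_of_mem _ hxy.1, childInd_of_mem _ hxy.2,
        childInd_of_mem _ (canStage_active_mono i.le_succ hxy.1),
        childInd_of_mem _ (canStage_active_mono i.le_succ hxy.2)]
    have habox : K.aboxRoleMult (.atomic P) x y = 0 := by
      cases x <;> cases y <;> first
        | rfl | exact absurd ⟨ind_mem_canStage_active _ i, ind_mem_canStage_active _ i⟩ hxy
    have hcycle : ∀ n m, ¬ (y = anon x (.atomic P) n ∧ x = anon y (.inv P) m) := by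
      rintro n m ⟨rfl, hx⟩
      have := congrArg depth hx
      simp only [depth] at this
      omega
    rw [if_neg hxy, habox, childInd_canStage_succ _ hxy,
      childInd_canStage_succ _ (hxy ∘ And.symm)]
    split_ifs <;> grind

lemma canStage_roleMult_eq (R : Role) (x y : CanElem) :
    (canStage K i).toInterp.roleMult R x y = K.aboxRoleMult R x y
      + childInd (canStage K i).active y R.inverse x
      + childInd (canStage K i).active x R y := by
  cases R with
  | atomic P => exact canStage_r_eq P x y
  | inv P =>
    have habox : K.aboxRoleMult (.inv P) x y = K.aboxRoleMult (.atomic P) y x := by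
      cases x <;> cases y <;> rfl
    rw [habox, add_right_comm]
    exact canStage_r_eq P y x

lemma canInterp_roleMult (R : Role) (x y : CanElem) :
    (canInterp K).roleMult R x y = ⨆ i, (canStage K i).toInterp.roleMult R x y := by
  cases R <;> rfl

lemma canInterp_roleMult_ind_ind (R : Role) (a b : Ind) :
    (canInterp K).roleMult R (ind a) (ind b) = K.roleCount R a b := by
  simp [canInterp_roleMult, canStage_roleMult_eq, childInd, Ontology.aboxRoleMult]

lemma canInterp_roleMult_ne_zero {R : Role} {x y : CanElem}
    (h : (canInterp K).roleMult R x y ≠ 0) :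
    (∃ a b, x = ind a ∧ y = ind b) ∨ (∃ n, y = anon x R n ∧ y ∈ canDomain K) ∨
      (∃ n, x = anon y R.inverse n ∧ x ∈ canDomain K) := by
  rw [canInterp_roleMult] at h
  obtain ⟨i, hi⟩ : ∃ i, (canStage K i).toInterp.roleMult R x y ≠ 0 := by
    by_contra! h'
    exact h (by simp [h'])
  rw [canStage_roleMult_eq] at hi
  have hdom : ∀ w ∈ (canStage K i).active, w ∈ canDomain K :=
    fun w hw => Set.mem_iUnion.mpr ⟨i, hw⟩
  by_cases habox : K.aboxRoleMult R x y = 0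
  · unfold childInd at hi
    split_ifs at hi with h1 h2 h2
    · obtain ⟨n, hn, hy⟩ := h2
      exact Or.inr (Or.inl ⟨n, hn, hdom y hy⟩)
    · obtain ⟨n, hn, hx⟩ := h1
      exact Or.inr (Or.inr ⟨n, hn, hdom x hx⟩)
    · obtain ⟨n, hn, hy⟩ := h2
      exact Or.inr (Or.inl ⟨n, hn, hdom y hy⟩)
    · simp [habox] at hi
  · left
    cases x <;> cases y <;> first | exact ⟨_, _, rfl, rfl⟩ | exact absurd rfl habox

lemma canInterp_roleMult_child_ne_zero {R : Role} {x : CanElem} {n : ℕ}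
    (h : anon x R n ∈ canDomain K) : (canInterp K).roleMult R x (anon x R n) ≠ 0 := by
  obtain ⟨i, hi⟩ := Set.mem_iUnion.mp h
  refine ne_bot_of_le_ne_bot one_ne_zero (le_trans ?_ (canInterp_roleMult R x _ ▸
    le_iSup (fun i => (canStage K i).toInterp.roleMult R x (anon x R n)) i))
  rw [canStage_roleMult_eq, childInd_of_mem R hi, if_pos ⟨n, rfl⟩]
  exact le_add_self

lemma canInterp_branch_eq {R : Role} {x y : CanElem} (h : (canInterp K).roleMult R x y ≠ 0)
    (hx : x.isAnon) (hy : y.isAnon) : branch x = branch y := by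
  rcases canInterp_roleMult_ne_zero h with ⟨_, _, rfl, -⟩ | ⟨n, rfl, -⟩ | ⟨n, rfl, -⟩
  · exact hx.elim
  · exact (branch_anon hx R n).symm
  · exact branch_anon hy _ n

lemma canInterp_roleMult_ind_ne_zero {R : Role} {y : CanElem} {d : Ind}
    (h : (canInterp K).roleMult R (ind d) y ≠ 0)
    (hy : y.isAnon) : ∃ n, y = anon (ind d) R n ∧ y ∈ canDomain K := by
  rcases canInterp_roleMult_ne_zero h with ⟨_, _, -, rfl⟩ | hchild | ⟨n, h', -⟩
  · exact hy.elim
  · exact hchild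
  · cases h'

end CanonicalRoles

/-- The `R`-successors of an element of `C(K)` other than its own anonymous children: the ABox
successors of an individual, and the parent of an anonymous element created for `R⁻`. -/
def externalMult (K : Ontology) (R : Role) : CanElem → ℕ∞
  | ind d => bagSum (K.roleCount R d)
  | anon _ Rp _ => if Rp = R.inverse then 1 else 0

def childCount (S : Set CanElem) (x : CanElem) (R : Role) : ℕ∞ :=
  bagSum fun n : ℕ => if anon x R n ∈ S then 1 else 0

lemma canStage_conceptMult_ex {K : Ontology} {i : ℕ} {x : CanElem}
    (hx : x ∈ (canStage K i).active) (R : Role) :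
    (canStage K i).toInterp.conceptMult (.ex R) x
      = externalMult K R x + childCount (canStage K i).active x R := by
  have h := congrArg bagSum (funext fun v => canStage_roleMult_eq (K := K) (i := i) R x v)
  rw [bagSum_add, bagSum_add] at h
  refine h.trans ?_
  have hchild :
      bagSum (childInd (canStage K i).active x R) = childCount (canStage K i).active x R := by
    rw [bagSum_comp_of_injective (anon x R) (fun _ _ h => by cases h; rfl)]
    · simp [childInd, childCount, Function.comp_def]
    · rintro v hv
      simp only [childInd, ite_eq_right_iff]
      rintro ⟨n, rfl, -⟩
      exact absurd ⟨n, rfl⟩ hv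
  rw [hchild]
  congr 1
  cases x with
  | ind d =>
    rw [bagSum_comp_of_injective ind (fun _ _ h => by cases h; rfl)]
    · simp [Function.comp_def, Ontology.aboxRoleMult, childInd, externalMult]
    · rintro (_ | _) hv
      · exact absurd ⟨_, rfl⟩ hv
      · simp [Ontology.aboxRoleMult]
  | anon p Rp jp =>
    have habox : K.aboxRoleMult R (anon p Rp jp) = fun _ => 0 := funext fun v => by cases v <;> rfl
    have hparent : ∀ v, childInd (canStage K i).active v R.inverse (anon p Rp jp)
        = if v = p then (if Rp = R.inverse then 1 else 0) else 0 := by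
      intro v
      simp only [childInd, anon.injEq, hx, and_true]
      by_cases hv : v = p <;> by_cases hR : Rp = R.inverse <;> simp_all [eq_comm]
    simp only [habox, hparent, bagSum_zero, zero_add, bagSum_ite_eq, externalMult]

def edgeOntology (T : TBox) (R : Role) (a b : Ind) : Ontology := ⟨T, {roleAssertion R a b}⟩

section EdgeOntology

variable {T : TBox} {R₀ : Role} {a b : Ind}

lemma edgeOntology_roleCount_self : (edgeOntology T R₀ a b).roleCount R₀ a b = 1 := by
  simp [edgeOntology, Ontology.roleCount, BagABox.mult]

lemma edgeOntology_conceptA (A : AtomicConcept) (c : Ind) :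
    (edgeOntology T R₀ a b).abox.mult (.conceptA A c) = 0 := by
  cases R₀ <;> simp [edgeOntology, roleAssertion, BagABox.mult]

lemma externalMult_edgeOntology (hab : a ≠ b) (R : Role) :
    externalMult (edgeOntology T R₀ a b) R (ind b) = if R₀ = R.inverse then 1 else 0 := by
  have hcount : ∀ e, (edgeOntology T R₀ a b).roleCount R b e
      = if e = a then (if R₀ = R.inverse then 1 else 0) else 0 := by
    intro e
    cases R <;> cases R₀ <;> by_cases he : e = a <;>
      simp_all [edgeOntology, Ontology.roleCount, BagABox.mult, roleAssertion, Role.inverse,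
        Multiset.count_singleton, eq_comm]
  rw [externalMult, funext hcount, bagSum_ite_eq]

end EdgeOntology

def StagesAgree (K K' : Ontology) (w₀ : CanElem) (b : Ind) (n k : ℕ) : Prop :=
  ∀ w, Below w₀ w →
    (w ∈ (canStage K n).active ↔ relabel w₀ b w ∈ (canStage K' k).active) ∧
      ∀ A, (canStage K n).c A w = (canStage K' k).c A (relabel w₀ b w)

section Simulation

variable {K K' : Ontology} {w₀ w : CanElem} {b : Ind} {n k : ℕ}

lemma StagesAgree.conceptMult_eq (h : StagesAgree K K' w₀ b n k)
    (hext : ∀ R w, Below w₀ w → externalMult K R w = externalMult K' R (relabel w₀ b w))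
    (hw : Below w₀ w) (hwa : w ∈ (canStage K n).active) (C : DLConcept) :
    (canStage K n).toInterp.conceptMult C w
      = (canStage K' k).toInterp.conceptMult C (relabel w₀ b w) := by
  cases C with
  | atomic A => exact (h w hw).2 A
  | ex R =>
    rw [canStage_conceptMult_ex hwa, canStage_conceptMult_ex ((h w hw).1.mp hwa), hext R w hw]
    congr 1
    unfold childCount
    congr 1
    funext m
    rw [← relabel_anon_of_below b hw, if_congr (h _ (hw.child R m)).1 rfl rfl]

lemma StagesAgree.succ (h : StagesAgree K K' w₀ b n k) (hT : K'.tbox = K.tbox)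
    (hext : ∀ R w, Below w₀ w → externalMult K R w = externalMult K' R (relabel w₀ b w))
    (hw₀ : w₀ ∈ (canStage K n).active) : StagesAgree K K' w₀ b (n + 1) (k + 1) := by
  have hccl : ∀ w, Below w₀ w → w ∈ (canStage K n).active → ∀ C,
      (canStage K n).ccl K.tbox w C = (canStage K' k).ccl K'.tbox (relabel w₀ b w) C :=
    fun w hw hwa C => hT ▸ iSup_congr fun C₀ => h.conceptMult_eq hext hw hwa C₀.1
  have hdelta : ∀ w, Below w₀ w → w ∈ (canStage K n).active → ∀ R,
      (canStage K n).delta K.tbox w R = (canStage K' k).delta K'.tbox (relabel w₀ b w) R :=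
    fun w hw hwa R => by
      rw [PreInterp.delta, PreInterp.delta, hccl w hw hwa, h.conceptMult_eq hext hw hwa]
  intro w hw
  constructor
  · cases hw with
    | refl =>
      rw [relabel_self]
      exact iff_of_true (canStage_active_mono n.le_succ hw₀) (ind_mem_canStage_active b _)
    | @child u R j hu =>
      refine or_congr (h _ (hu.child R j)).1 ?_
      change (canStage K n).NewAnon K.tbox _
        ↔ (canStage K' k).NewAnon K'.tbox (relabel w₀ b (anon u R j))
      rw [relabel_anon_of_below b hu, PreInterp.newAnon_anon_iff, PreInterp.newAnon_anon_iff]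
      constructor
      · rintro ⟨hua, hj⟩
        exact ⟨(h u hu).1.mp hua, hdelta u hu hua R ▸ hj⟩
      · rintro ⟨hua', hj⟩
        have hua := (h u hu).1.mpr hua'
        exact ⟨hua, (hdelta u hu hua R).symm ▸ hj⟩
  · intro A
    show (if w ∈ (canStage K n).active then _ else 0)
      = if relabel w₀ b w ∈ (canStage K' k).active then _ else 0
    by_cases hwa : w ∈ (canStage K n).active
    · rw [if_pos hwa, if_pos ((h w hw).1.mp hwa)]
      exact hccl w hw hwa _
    · rw [if_neg hwa, if_neg (mt (h w hw).1.mpr hwa)]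

end Simulation

section EdgeSimulation

variable {K : Ontology} {p w : CanElem} {R₀ : Role} {j₀ i : ℕ} {a b : Ind}

/-- At `b`, the assertion `R₀(a,b)` plays the part of the edge from `w₀` to its parent. -/
lemma externalMult_relabel (hab : a ≠ b) (R : Role) (hw : Below (anon p R₀ j₀) w) :
    externalMult K R w
      = externalMult (edgeOntology K.tbox R₀ a b) R (relabel (anon p R₀ j₀) b w) := by
  cases hw with
  | refl => rw [relabel_self, externalMult_edgeOntology hab]; rfl
  | child R' j hu => rw [relabel_anon_of_below b hu]; rfl

lemma stagesAgree_born (hborn : anon p R₀ j₀ ∉ (canStage K i).active)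
    (hact : anon p R₀ j₀ ∈ (canStage K (i + 1)).active) :
    StagesAgree K (edgeOntology K.tbox R₀ a b) (anon p R₀ j₀) b (i + 1) 0 := by
  have hnew : ∀ w, Below (anon p R₀ j₀) w → w ∉ (canStage K i).active :=
    fun w hw hwa => hborn (hw.mem_canStage_active hwa)
  intro w hw
  refine ⟨?_, fun A => ?_⟩
  · cases hw with
    | refl => exact iff_of_true hact (relabel_self _ b ▸ ind_mem_canStage_active b 0)
    | child R j hu =>
      refine iff_of_false (fun h => hnew _ hu (parent_mem_canStage_active_of_succ h)) ?_
      rw [relabel_anon_of_below b hu]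
      exact anon_not_mem_canStage_zero
  · show (if w ∈ (canStage K i).active then _ else 0) = _
    rw [if_neg (hnew w hw)]
    cases hw with
    | refl => rw [relabel_self]; exact (edgeOntology_conceptA A b).symm
    | child R j hu => rw [relabel_anon_of_below b hu]; rfl

lemma stagesAgree_of_born (hab : a ≠ b) (hborn : anon p R₀ j₀ ∉ (canStage K i).active)
    (hact : anon p R₀ j₀ ∈ (canStage K (i + 1)).active) :
    ∀ k, StagesAgree K (edgeOntology K.tbox R₀ a b) (anon p R₀ j₀) b (i + 1 + k) k
  | 0 => stagesAgree_born hborn hact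
  | k + 1 => (stagesAgree_of_born hab hborn hact k).succ rfl
      (fun R _ hw => externalMult_relabel hab R hw) (canStage_active_mono (by omega) hact)

lemma mem_canDomain_relabel_iff (hab : a ≠ b) (hp : anon p R₀ j₀ ∈ canDomain K)
    (hw : Below (anon p R₀ j₀) w) :
    relabel (anon p R₀ j₀) b w ∈ canDomain (edgeOntology K.tbox R₀ a b)
      ↔ w ∈ canDomain K := by
  obtain ⟨i, hborn, hact⟩ := exists_born hp
  simp only [canDomain, Set.mem_iUnion]
  constructor
  · rintro ⟨k, hk⟩
    exact ⟨_, ((stagesAgree_of_born hab hborn hact k w hw).1).mpr hk⟩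
  · rintro ⟨m, hm⟩
    exact ⟨m, ((stagesAgree_of_born hab hborn hact m w hw).1).mp
      (canStage_active_mono (by omega) hm)⟩

lemma canInterp_cI_relabel (hab : a ≠ b) (hp : anon p R₀ j₀ ∈ canDomain K)
    (hw : Below (anon p R₀ j₀) w) (A : AtomicConcept) :
    (canInterp (edgeOntology K.tbox R₀ a b)).cI A (relabel (anon p R₀ j₀) b w)
      = (canInterp K).cI A w := by
  obtain ⟨i, hborn, hact⟩ := exists_born hp
  show (⨆ k, _) = ⨆ n, (canStage K n).c A w
  rw [← (canStage_c_mono A w).iSup_nat_add (i + 1)]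
  refine iSup_congr fun k => ?_
  rw [add_comm]
  exact ((stagesAgree_of_born hab hborn hact k w hw).2 A).symm

end EdgeSimulation

def branchMap (w₀ : CanElem) (a b : Ind) (x : CanElem) : CanElem :=
  if Below w₀ x then relabel w₀ b x else ind a

section BranchMap

variable {K : Ontology} {c : Ind} {R₀ : Role} {j₀ : ℕ} {a b : Ind}

lemma branchMap_of_below {w₀ x : CanElem} (h : Below w₀ x) :
    branchMap w₀ a b x = relabel w₀ b x :=
  if_pos h

lemma branchMap_ind {p : CanElem} (d : Ind) : branchMap (anon p R₀ j₀) a b (ind d) = ind a :=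
  if_neg fun h => h.isAnon

lemma canInterp_roleMult_branchMap_child (hab : a ≠ b)
    (hw₀ : anon (ind c) R₀ j₀ ∈ canDomain K) {x : CanElem} {R : Role} {n : ℕ}
    (hx : Below (anon (ind c) R₀ j₀) x ∨ x = ind c)
    (hy : Below (anon (ind c) R₀ j₀) (anon x R n)) (hdom : anon x R n ∈ canDomain K) :
    (canInterp (edgeOntology K.tbox R₀ a b)).roleMult R (branchMap (anon (ind c) R₀ j₀) a b x)
      (branchMap (anon (ind c) R₀ j₀) a b (anon x R n)) ≠ 0 := by
  rw [branchMap_of_below hy]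
  rcases hx with hx | rfl
  · rw [branchMap_of_below hx, relabel_anon_of_below b hx]
    refine canInterp_roleMult_child_ne_zero ?_
    rw [← relabel_anon_of_below b hx]
    exact (mem_canDomain_relabel_iff hab hw₀ hy).mpr hdom
  · obtain ⟨-, rfl, -⟩ := anon.inj hy.eq_of_parent_ind
    rw [hy.eq_of_parent_ind, relabel_self, branchMap_ind, canInterp_roleMult_ind_ind,
      edgeOntology_roleCount_self]
    exact one_ne_zero

lemma canInterp_roleMult_branchMap (hab : a ≠ b) (hw₀ : anon (ind c) R₀ j₀ ∈ canDomain K)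
    {x y : CanElem} (hx : Below (anon (ind c) R₀ j₀) x ∨ x = ind c)
    (hy : Below (anon (ind c) R₀ j₀) y ∨ y = ind c) (hxy : x.isAnon ∨ y.isAnon) {R : Role}
    (h : (canInterp K).roleMult R x y ≠ 0) :
    (canInterp (edgeOntology K.tbox R₀ a b)).roleMult R (branchMap (anon (ind c) R₀ j₀) a b x)
      (branchMap (anon (ind c) R₀ j₀) a b y) ≠ 0 := by
  rcases canInterp_roleMult_ne_zero h with
    ⟨_, _, rfl, rfl⟩ | ⟨n, rfl, hdom⟩ | ⟨n, rfl, hdom⟩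
  · exact (hxy.elim id id).elim
  · exact canInterp_roleMult_branchMap_child hab hw₀ hx (hy.resolve_right nofun) hdom
  · exact (BagInterp.roleMult_inverse _ R _ _).symm.trans_ne
      (canInterp_roleMult_branchMap_child hab hw₀ hy (hx.resolve_right nofun) hdom)

end BranchMap

section QuerySyntax

variable {q : CQ} {z z' : Finset Var}

lemma QAtom.mem_vars_iff {v : Var} {atm : QAtom} : v ∈ atm.vars ↔ Term.var v ∈ atm.terms := by
  cases atm with
  | conceptAt _ t => cases t <;> simp [QAtom.vars, QAtom.terms, Term.varsOf, eq_comm]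
  | roleAt _ t₁ t₂ =>
    cases t₁ <;> cases t₂ <;> simp [QAtom.vars, QAtom.terms, Term.varsOf, eq_comm]
  | eqAt _ t => cases t <;> simp [QAtom.vars, QAtom.terms, Term.varsOf, eq_comm]

lemma mem_foldr_append {α β : Type*} {g : α → List β} {l : List α} {x : β} :
    x ∈ l.foldr (fun a acc => g a ++ acc) [] ↔ ∃ a ∈ l, x ∈ g a := by
  induction l <;> simp [*]

lemma CQ.mem_subAtoms {atm : QAtom} :
    atm ∈ q.subAtoms z' ↔ atm ∈ q.atoms ∧ ∃ v ∈ z', v ∈ atm.vars := by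
  simp [CQ.subAtoms]

lemma CQ.mem_subVars {v : Var} : v ∈ subVars q z' ↔ ∃ atm ∈ q.subAtoms z', v ∈ atm.vars :=
  mem_foldr_append

lemma mem_termsOfList {l : List QAtom} {t : Term} :
    t ∈ termsOfList l ↔ ∃ atm ∈ l, t ∈ atm.terms :=
  mem_foldr_append

lemma CQ.mem_tTerms {t : Term} :
    t ∈ q.tTerms z z' ↔ (∃ atm ∈ q.subAtoms z', t ∈ atm.terms) ∧ ¬ t.IsZVar z := by
  simp [CQ.tTerms, mem_termsOfList]

lemma CQ.eqRel_mentionsTerm {s t : Term} (h : q.eqRel s t) :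
    s = t ∨ (q.mentionsTerm s ∧ q.mentionsTerm t) := by
  induction h with
  | rel s t hst =>
    obtain ⟨v, t, hmem, rfl, rfl⟩ := hst
    exact Or.inr ⟨⟨_, hmem, by simp [QAtom.terms]⟩, ⟨_, hmem, by simp [QAtom.terms]⟩⟩
  | refl => exact Or.inl rfl
  | symm _ _ _ ih => exact ih.imp Eq.symm And.symm
  | trans _ _ _ _ _ ih₁ ih₂ =>
    rcases ih₁ with rfl | h₁
    · exact ih₂
    · exact Or.inr ⟨h₁.1, ih₂.elim (· ▸ h₁.2) And.right⟩

lemma CQ.Safe.exists_atom (hq : q.Safe) {v : Var} (hv : v ∈ q.vars) :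
    ∃ atm ∈ q.atoms, v ∈ atm.vars := by
  obtain ⟨t, atm, hatm, -, ht, hrel⟩ := hq v hv
  simp only [QAtom.mem_vars_iff]
  rcases q.eqRel_mentionsTerm hrel with rfl | ⟨hm, -⟩
  · exact ⟨atm, hatm, ht⟩
  · exact hm

lemma freshA_le_maxInd : freshA q z z' ≤ q.maxInd + 1 := by
  unfold freshA
  split_ifs with h
  · obtain ⟨atm, hatm, ht⟩ := (CQ.mem_tTerms.mp h.choose_spec).1
    have hd : h.choose ∈ q.inds := mem_foldr_append.mpr
      ⟨_, mem_termsOfList.mpr ⟨atm, (CQ.mem_subAtoms.mp hatm).1, ht⟩, by simp [Term.indsOf]⟩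
    exact (List.le_max_of_le' 0 hd le_rfl).trans (Nat.le_succ _)
  · rfl

lemma freshA_ne_freshB : freshA q z z' ≠ freshB q :=
  (freshA_le_maxInd.trans_lt (Nat.lt_succ_self _)).ne

lemma Term.isZVar_var {v : Var} : (Term.var v).IsZVar z ↔ v ∈ z := by
  simp [Term.IsZVar]

lemma Term.not_isZVar_ind (d : Ind) : ¬ (Term.ind d).IsZVar z := by
  simp [Term.IsZVar]

lemma eq_freshA_of_mem_tTerms {c d : Ind} (hc : ∀ d, Term.ind d ∈ q.tTerms z z' → d = c)
    (hd : Term.ind d ∈ q.tTerms z z') : d = freshA q z z' := by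
  have h : ∃ c, Term.ind c ∈ q.tTerms z z' := ⟨d, hd⟩
  rw [freshA, dif_pos h, hc d hd, hc _ h.choose_spec]

/-- `atm` is the role atom `R(t, v)`: `P(t, v)` if `R = P`, and `P(v, t)` if `R = P⁻`. -/
def QAtom.IsRoleLink (atm : QAtom) (t : Term) (R : Role) (v : Var) : Prop :=
  (∃ P, R = .atomic P ∧ atm = .roleAt P t (.var v)) ∨
    (∃ P, R = .inv P ∧ atm = .roleAt P (.var v) t)

lemma IsAlphaFor.exists_isRoleLink {atm : QAtom} (h : IsAlphaFor q z z' atm) :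
    ∃ t R v, v ∈ z' ∧ ¬ t.IsZVar z ∧ atm.IsRoleLink t R v := by
  rcases h.2 with ⟨P, t, v, hv, ht, rfl⟩ | ⟨P, t, v, hv, ht, rfl⟩
  · exact ⟨t, .atomic P, v, hv, ht, Or.inl ⟨P, rfl, rfl⟩⟩
  · exact ⟨t, .inv P, v, hv, ht, Or.inr ⟨P, rfl, rfl⟩⟩

lemma QAtom.IsRoleLink.mult_eq {atm : QAtom} {t : Term} {R : Role} {v : Var}
    (h : atm.IsRoleLink t R v) (I : BagInterp) (f : Var → I.Δ) :
    atm.mult I f = I.roleMult R (termVal I f t) (f v) := by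
  rcases h with ⟨P, rfl, rfl⟩ | ⟨P, rfl, rfl⟩ <;> rfl

lemma QAtom.IsRoleLink.alphaABox_eq {atm : QAtom} {t : Term} {R : Role} {v : Var}
    (h : atm.IsRoleLink t R v) (hv : v ∈ z') (ht : ¬ t.IsZVar z') (a b : Ind) :
    alphaABox z' atm a b = {roleAssertion R a b} := by
  rcases h with ⟨P, rfl, rfl⟩ | ⟨P, rfl, rfl⟩
  · simp [alphaABox, roleAssertion, Term.isZVar_var.mpr hv]
  · simp [alphaABox, roleAssertion, ht]

lemma realisableMA_of_valuation {T : TBox} {atm : QAtom} {K' : Ontology}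
    (hK' : (⟨T, alphaABox z' atm (freshA q z z') (freshB q)⟩ : Ontology) = K')
    (g : Var → CanElem) (hg : ∀ v ∉ subVars q z', g v = ind 0)
    (ht : ∀ t ∈ q.tTerms z z', termVal (canInterp K') g t = ind (freshA q z z'))
    (hz' : ∀ v ∈ z', g v ≠ ind (freshA q z z'))
    (hmult : ∀ atm' ∈ q.subAtoms z', atm'.mult (canInterp K') g ≠ 0) :
    RealisableMA T q z z' atm := by
  subst hK'
  refine le_trans (Order.one_le_iff_ne_zero.mpr fun h0 => ?_) (le_bagSum _ ⟨g, hg, ht, hz'⟩)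
  obtain ⟨atm', hatm', h⟩ := List.mem_map.mp (List.prod_eq_zero_iff.mp h0)
  exact hmult atm' hatm' h

end QuerySyntax

/-- What a valuation contributing to `[q,z]^{C(K)}` retains. -/
structure IsZMatch (K : Ontology) (q : CQ) (z : Finset Var) (f : Var → CanElem) : Prop where
  mult_ne_zero : ∀ atm ∈ q.atoms, atm.mult (canInterp K) f ≠ 0
  isAnon_iff : ∀ atm ∈ q.atoms, ∀ t ∈ atm.terms,
    (termVal (canInterp K) f t).isAnon ↔ t.IsZVar z

lemma exists_isZMatch {K : Ontology} {q : CQ} {z : Finset Var} {a : List Ind}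
    (hwf : q.WellFormed) (hz : z ⊆ q.existVars.toFinset) (h : q.restrictedAnswer K z a ≠ 0) :
    ∃ f, IsZMatch K q z f := by
  rw [Ne, CQ.restrictedAnswer, bagSum_eq_zero_iff, not_forall] at h
  obtain ⟨⟨f, _, hans, hex⟩, hf⟩ := h
  refine ⟨f, fun atm hatm h0 => hf (List.prod_eq_zero_iff.mpr (h0 ▸ List.mem_map_of_mem hatm)),
    fun atm hatm t ht => ?_⟩
  cases t with
  | ind d => exact iff_of_false id (Term.not_isZVar_ind d)
  | var v =>
    rw [Term.isZVar_var]
    by_cases hvz : v ∈ z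
    · exact iff_of_true ((hex v (List.mem_toFinset.mp (hz hvz))).1 hvz) hvz
    refine iff_of_false ?_ hvz
    rcases List.mem_append.mp (hwf.2.2.2.1 atm hatm v (QAtom.mem_vars_iff.mpr ht)) with hv | hv
    · obtain ⟨d, -, hd⟩ := List.mem_map.mp (hans ▸ List.mem_map_of_mem (f := f) hv)
      simp [termVal, ← hd, CanElem.isAnon]
    · obtain ⟨d, hd⟩ := (hex v hv).2 hvz
      simp [termVal, hd, CanElem.isAnon]

namespace IsZMatch

variable {K : Ontology} {q : CQ} {z z' : Finset Var} {f : Var → CanElem} {vα : Var} {c : Ind}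
  {R₀ : Role} {j₀ : ℕ}

lemma eq_termVal_of_eqAt (hf : IsZMatch K q z f) {v : Var} {t : Term}
    (h : QAtom.eqAt v t ∈ q.atoms) : f v = termVal (canInterp K) f t := by
  by_contra hne
  exact hf.mult_ne_zero _ h (if_neg hne)

lemma isZVar_iff_of_eqAt (hf : IsZMatch K q z f) {v : Var} {t : Term}
    (h : QAtom.eqAt v t ∈ q.atoms) : v ∈ z ↔ t.IsZVar z := by
  rw [← Term.isZVar_var, ← hf.isAnon_iff _ h _ (by simp [QAtom.terms]),
    ← hf.isAnon_iff _ h t (by simp [QAtom.terms])]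
  exact iff_of_eq (congrArg CanElem.isAnon (hf.eq_termVal_of_eqAt h))

lemma eqConsistent (hf : IsZMatch K q z f) : EqConsistent q z :=
  fun _ _ h hv => (hf.isZVar_iff_of_eqAt h).mp hv

lemma branch_eq_of_mem_terms (hf : IsZMatch K q z f) {atm : QAtom} (hatm : atm ∈ q.atoms)
    {s t : Term} (hs : s ∈ atm.terms) (ht : t ∈ atm.terms) (hsz : s.IsZVar z)
    (htz : t.IsZVar z) :
    branch (termVal (canInterp K) f s) = branch (termVal (canInterp K) f t) := by
  have hsa := (hf.isAnon_iff _ hatm s hs).mpr hsz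
  have hta := (hf.isAnon_iff _ hatm t ht).mpr htz
  cases atm with
  | conceptAt A r =>
    simp only [QAtom.terms, List.mem_singleton] at hs ht
    rw [hs, ht]
  | eqAt v r =>
    have hval : ∀ r' ∈ (QAtom.eqAt v r).terms, termVal (canInterp K) f r' = f v := by
      simp only [QAtom.terms, List.mem_cons, List.not_mem_nil, or_false]
      rintro r' (rfl | rfl)
      exacts [rfl, (hf.eq_termVal_of_eqAt hatm).symm]
    rw [hval s hs, hval t ht]
  | roleAt P t₁ t₂ =>
    have hm : (canInterp K).roleMult (.atomic P) (termVal (canInterp K) f t₁)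
        (termVal (canInterp K) f t₂) ≠ 0 := hf.mult_ne_zero _ hatm
    simp only [QAtom.terms, List.mem_cons, List.not_mem_nil, or_false] at hs ht
    rcases hs with rfl | rfl <;> rcases ht with rfl | rfl
    · rfl
    · exact canInterp_branch_eq hm hsa hta
    · exact (canInterp_branch_eq hm hta hsa).symm
    · rfl

lemma branch_eq_of_reflTransGen (hf : IsZMatch K q z f) {s t : Term}
    (h : Relation.ReflTransGen (q.zAdj z) s t) :
    branch (termVal (canInterp K) f s) = branch (termVal (canInterp K) f t) := by
  induction h with
  | refl => rfl
  | tail _ hst ih =>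
    obtain ⟨⟨atm, hatm, hs, ht⟩, hsz, htz⟩ := hst
    exact ih.trans (hf.branch_eq_of_mem_terms hatm hs ht hsz htz)

lemma exists_roleMult_ne_zero (hf : IsZMatch K q z f) {atm : QAtom} (hatm : atm ∈ q.atoms)
    {s t : Term} (hs : s ∈ atm.terms) (ht : t ∈ atm.terms) (hsz : s.IsZVar z)
    (htz : ¬ t.IsZVar z) : ∃ R,
      (canInterp K).roleMult R (termVal (canInterp K) f t) (termVal (canInterp K) f s) ≠ 0 := by
  cases atm with
  | conceptAt A r =>
    simp only [QAtom.terms, List.mem_singleton] at hs ht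
    rw [hs, ← ht] at hsz
    exact absurd hsz htz
  | eqAt v r =>
    simp only [QAtom.terms, List.mem_cons, List.not_mem_nil, or_false] at hs ht
    have := hf.isZVar_iff_of_eqAt hatm
    rcases hs with rfl | rfl <;> rcases ht with rfl | rfl <;> simp_all [Term.isZVar_var]
  | roleAt P t₁ t₂ =>
    have hm : (canInterp K).roleMult (.atomic P) (termVal (canInterp K) f t₁)
        (termVal (canInterp K) f t₂) ≠ 0 := hf.mult_ne_zero _ hatm
    simp only [QAtom.terms, List.mem_cons, List.not_mem_nil, or_false] at hs ht
    rcases hs with rfl | rfl <;> rcases ht with rfl | rfl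
    · exact absurd hsz htz
    · exact ⟨.inv P, hm⟩
    · exact ⟨.atomic P, hm⟩
    · exact absurd hsz htz

lemma exists_root (hf : IsZMatch K q z f) {atm : QAtom} (hatm : atm ∈ q.atoms) {t : Term}
    {R : Role} {v : Var} (hlink : atm.IsRoleLink t R v) (hv : v ∈ z) (ht : ¬ t.IsZVar z) :
    ∃ c n, f v = anon (ind c) R n ∧ anon (ind c) R n ∈ canDomain K := by
  have hterms : t ∈ atm.terms ∧ Term.var v ∈ atm.terms := by
    rcases hlink with ⟨P, -, rfl⟩ | ⟨P, -, rfl⟩ <;> simp [QAtom.terms]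
  obtain ⟨c, hc⟩ := exists_eq_ind_of_not_isAnon (mt (hf.isAnon_iff _ hatm t hterms.1).mp ht)
  have hm := hlink.mult_eq (canInterp K) f ▸ hf.mult_ne_zero _ hatm
  rw [hc] at hm
  obtain ⟨n, hn, hdom⟩ := canInterp_roleMult_ind_ne_zero hm
    ((hf.isAnon_iff _ hatm _ hterms.2).mpr (Term.isZVar_var.mpr hv))
  exact ⟨c, n, hn, hn ▸ hdom⟩

lemma below_of_mem_subAtoms (hf : IsZMatch K q z f) (hma : q.MAConnected z z') (hvα : vα ∈ z')
    (hroot : f vα = anon (ind c) R₀ j₀) {atm : QAtom} (hatm : atm ∈ q.subAtoms z') {t : Term}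
    (ht : t ∈ atm.terms) (htz : t.IsZVar z) : Below (anon (ind c) R₀ j₀) (termVal (canInterp K) f t) := by
  obtain ⟨hatm', v, hv, hvatm⟩ := CQ.mem_subAtoms.mp hatm
  obtain ⟨u, hu, rfl⟩ := htz
  have hadj : q.zAdj z (.var v) (.var u) :=
    ⟨⟨atm, hatm', QAtom.mem_vars_iff.mp hvatm, ht⟩, ⟨v, hma.1 hv, rfl⟩, ⟨u, hu, rfl⟩⟩
  have huz' : u ∈ z' := hma.2.1 v hv u hu (.single hadj)
  have hbranch : branch (f u) = anon (ind c) R₀ j₀ :=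
    (hf.branch_eq_of_reflTransGen (hma.2.2 u huz' vα hvα)).trans
      (by simp [termVal, hroot, branch])
  exact hbranch ▸ below_branch ((hf.isAnon_iff _ hatm' _ ht).mpr ⟨u, hu, rfl⟩)

lemma termVal_eq_root (hf : IsZMatch K q z f) (hma : q.MAConnected z z') (hvα : vα ∈ z')
    (hroot : f vα = anon (ind c) R₀ j₀) {atm : QAtom} (hatm : atm ∈ q.subAtoms z') {t : Term}
    (ht : t ∈ atm.terms) (htz : ¬ t.IsZVar z) : termVal (canInterp K) f t = ind c := by
  obtain ⟨hatm', v, hv, hvatm⟩ := CQ.mem_subAtoms.mp hatm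
  have hvt := QAtom.mem_vars_iff.mp hvatm
  have hvz : (Term.var v).IsZVar z := ⟨v, hma.1 hv, rfl⟩
  obtain ⟨d, hd⟩ := exists_eq_ind_of_not_isAnon (mt (hf.isAnon_iff _ hatm' t ht).mp htz)
  obtain ⟨R, hR⟩ := hf.exists_roleMult_ne_zero hatm' hvt ht hvz htz
  have hb := hf.below_of_mem_subAtoms hma hvα hroot hatm hvt hvz
  rw [hd] at hR
  obtain ⟨n, hn, -⟩ := canInterp_roleMult_ind_ne_zero hR hb.isAnon
  rw [hn] at hb
  have h := hb.eq_of_parent_ind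
  simp only [anon.injEq, ind.injEq] at h
  rw [hd, h.1]

lemma below_or_eq_root (hf : IsZMatch K q z f) (hma : q.MAConnected z z') (hvα : vα ∈ z')
    (hroot : f vα = anon (ind c) R₀ j₀) {atm : QAtom} (hatm : atm ∈ q.subAtoms z') {t : Term}
    (ht : t ∈ atm.terms) :
    Below (anon (ind c) R₀ j₀) (termVal (canInterp K) f t) ∨
      termVal (canInterp K) f t = ind c := by
  by_cases htz : t.IsZVar z
  · exact Or.inl (hf.below_of_mem_subAtoms hma hvα hroot hatm ht htz)
  · exact Or.inr (hf.termVal_eq_root hma hvα hroot hatm ht htz)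

lemma mult_branchMap_ne_zero (hf : IsZMatch K q z f) (hma : q.MAConnected z z')
    (hvα : vα ∈ z') (hroot : f vα = anon (ind c) R₀ j₀)
    (hdom : anon (ind c) R₀ j₀ ∈ canDomain K)
    {a b : Ind} (hab : a ≠ b) {atm : QAtom} (hatm : atm ∈ q.subAtoms z') {g : Var → CanElem}
    (hg : ∀ t ∈ atm.terms, termVal (canInterp (edgeOntology K.tbox R₀ a b)) g t
      = branchMap (anon (ind c) R₀ j₀) a b (termVal (canInterp K) f t)) :
    atm.mult (canInterp (edgeOntology K.tbox R₀ a b)) g ≠ 0 := by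
  obtain ⟨hatm', v, hv, hvatm⟩ := CQ.mem_subAtoms.mp hatm
  have hvt := QAtom.mem_vars_iff.mp hvatm
  have hvz : (Term.var v).IsZVar z := ⟨v, hma.1 hv, rfl⟩
  have hm := hf.mult_ne_zero _ hatm'
  cases atm with
  | conceptAt A t =>
    simp only [QAtom.terms, List.mem_singleton] at hvt
    subst hvt
    have hb := hf.below_of_mem_subAtoms hma hvα hroot hatm (by simp [QAtom.terms]) hvz
    show (canInterp _).cI A _ ≠ 0
    rw [hg _ (by simp [QAtom.terms]), branchMap_of_below hb, canInterp_cI_relabel hab hdom hb]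
    exact hm
  | roleAt P t₁ t₂ =>
    have hdom' := fun t ht => hf.below_or_eq_root hma hvα hroot hatm (t := t) ht
    have hanon :
        (termVal (canInterp K) f t₁).isAnon ∨ (termVal (canInterp K) f t₂).isAnon := by
      simp only [QAtom.terms, List.mem_cons, List.not_mem_nil, or_false] at hvt
      rcases hvt with h | h
      · exact Or.inl ((hf.isAnon_iff _ hatm' t₁ (by simp [QAtom.terms])).mpr (h ▸ hvz))
      · exact Or.inr ((hf.isAnon_iff _ hatm' t₂ (by simp [QAtom.terms])).mpr (h ▸ hvz))
    show (canInterp _).roleMult (.atomic P) _ _ ≠ 0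
    rw [hg t₁ (by simp [QAtom.terms]), hg t₂ (by simp [QAtom.terms])]
    exact canInterp_roleMult_branchMap hab hdom (hdom' t₁ (by simp [QAtom.terms]))
      (hdom' t₂ (by simp [QAtom.terms])) hanon hm
  | eqAt u t =>
    refine (if_pos ?_).trans_ne one_ne_zero
    rw [show g u = _ from hg (.var u) (by simp [QAtom.terms]), hg t (by simp [QAtom.terms])]
    exact congrArg _ (hf.eq_termVal_of_eqAt hatm')

lemma termVal_branchMap_valuation (hf : IsZMatch K q z f) (hma : q.MAConnected z z')
    (hvα : vα ∈ z') (hroot : f vα = anon (ind c) R₀ j₀) (b : Ind) (K' : Ontology)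
    {atm : QAtom} (hatm : atm ∈ q.subAtoms z') {t : Term} (ht : t ∈ atm.terms) :
    termVal (canInterp K') (fun v => if v ∈ subVars q z' then
        branchMap (anon (ind c) R₀ j₀) (freshA q z z') b (f v) else ind 0) t
      = branchMap (anon (ind c) R₀ j₀) (freshA q z z') b (termVal (canInterp K) f t) := by
  cases t with
  | var u => exact if_pos (CQ.mem_subVars.mpr ⟨atm, hatm, QAtom.mem_vars_iff.mpr ht⟩)
  | ind d =>
    have hc : ∀ d, Term.ind d ∈ q.tTerms z z' → d = c := fun d hd => by
      obtain ⟨⟨atm, hatm, ht⟩, htz⟩ := CQ.mem_tTerms.mp hd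
      exact ind.inj (hf.termVal_eq_root hma hvα hroot hatm ht htz)
    show ind d = branchMap _ _ _ (ind d)
    rw [branchMap_ind, eq_freshA_of_mem_tTerms hc
      (CQ.mem_tTerms.mpr ⟨⟨atm, hatm, ht⟩, Term.not_isZVar_ind d⟩)]

theorem realisableMA (hf : IsZMatch K q z f)
    (hocc : ∀ v ∈ z, ∃ atm ∈ q.atoms, v ∈ atm.vars) (hma : q.MAConnected z z') {atm : QAtom}
    (hα : IsAlphaFor q z z' atm) :
    RealisableMA K.tbox q z z' atm := by
  obtain ⟨tα, R₀, vα, hvα, htα, hlink⟩ := hα.exists_isRoleLink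
  obtain ⟨c, j₀, hroot, hdom⟩ :=
    hf.exists_root (CQ.mem_subAtoms.mp hα.1).1 hlink (hma.1 hvα) htα
  have hab : freshA q z z' ≠ freshB q := freshA_ne_freshB
  have hg := fun atm (hatm : atm ∈ q.subAtoms z') t (ht : t ∈ atm.terms) =>
    hf.termVal_branchMap_valuation hma hvα hroot (freshB q)
      (edgeOntology K.tbox R₀ (freshA q z z') (freshB q)) hatm ht
  refine realisableMA_of_valuation ?_ _ (fun v hv => if_neg hv) (fun t ht => ?_) (fun v hv => ?_)
    (fun atm hatm => hf.mult_branchMap_ne_zero hma hvα hroot hdom hab hatm (hg atm hatm))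
  · rw [hlink.alphaABox_eq hvα (fun ⟨u, hu, h⟩ => htα ⟨u, hma.1 hu, h⟩)]
    rfl
  · obtain ⟨⟨atm, hatm, htm⟩, htz⟩ := CQ.mem_tTerms.mp ht
    refine (hg atm hatm t htm).trans ?_
    rw [hf.termVal_eq_root hma hvα hroot hatm htm htz, branchMap_ind]
  · obtain ⟨atm, hatm, hvatm⟩ := hocc v (hma.1 hv)
    have hatm' : atm ∈ q.subAtoms z' := CQ.mem_subAtoms.mpr ⟨hatm, v, hv, hvatm⟩
    have hb := hf.below_of_mem_subAtoms hma hvα hroot hatm' (QAtom.mem_vars_iff.mp hvatm)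
      ⟨v, hma.1 hv, rfl⟩
    refine (hg atm hatm' _ (QAtom.mem_vars_iff.mp hvatm)).trans_ne ?_
    rw [branchMap_of_below hb]
    exact relabel_ne_ind hb hab

end IsZMatch

theorem statement_11_general (K : Ontology)
    (q : CQ) (hwf : q.WellFormed)
    (z : Finset Var) (hz : z ⊆ q.existVars.toFinset)
    (alpha : Finset Var → QAtom)
    (halpha : ∀ z' : Finset Var, q.MAConnected z z' → z'.Nonempty →
      IsAlphaFor q z z' (alpha z'))
    (hreal : ¬ RealisableZ K.tbox q z alpha)
    (a : List Ind) :
    q.restrictedAnswer K z a = 0 := by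
  by_contra h
  obtain ⟨f, hf⟩ := exists_isZMatch hwf hz h
  have hocc : ∀ v ∈ z, ∃ atm ∈ q.atoms, v ∈ atm.vars := fun v hv =>
    hwf.2.2.2.2.exists_atom (List.mem_append_right _ (List.mem_toFinset.mp (hz hv)))
  exact hreal ⟨hf.eqConsistent, fun z' hma hne => hf.realisableMA hocc hma (halpha z' hma hne)⟩

/-- Let `q(x) = ∃y. φ(x,y)` be a rooted CQ, `K` a
DL-Lite_core^bag ontology with TBox `T`, and `z ⊆ y`.  If `z` is not realisable
by `T` (w.r.t. a choice `alpha` of the atoms `α_{z'}`), then `[q,z]^{C(K)}` is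
the empty bag. -/
theorem statement_11 (K : Ontology) (hcore : TBox.IsCore K.tbox)
    (q : CQ) (hwf : q.WellFormed) (hr : q.Rooted)
    (z : Finset Var) (hz : z ⊆ q.existVars.toFinset)
    (alpha : Finset Var → QAtom)
    (halpha : ∀ z' : Finset Var, q.MAConnected z z' → z'.Nonempty →
      IsAlphaFor q z z' (alpha z'))
    (hreal : ¬ RealisableZ K.tbox q z alpha)
    (a : List Ind) :
    q.restrictedAnswer K z a = 0 :=
  statement_11_general K q hwf z hz alpha halpha hreal a
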